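/- arXiv:1308.6665 — 3 statements merged into one kernel-verified Lean document; each statement's English description precedes it below -/
import Mathlib

section
/- Absolute convergence of the bilateral ₁ψ₁ series: let 0<q<1 and let a,b,x be complex numbers with a ≠ 0, x ≠ 0, b ∉ {q^m : m ∈ ℤ, m ≥ 1}, and |b/a| < |x| < 1. Then the bilateral series ∑_{ν=-∞}^{∞} ((a)_ν/(b)_ν) x^ν converges absolutely (i.e. ∑_{ν∈ℤ} |(a)_ν/(b)_ν| |x|^ν < ∞). -/
/-!
Whenever neither `a q^ν` nor `b q^ν` equals `1` (which excludes at most one `ν` for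
each), consecutive terms of the `₁ψ₁` series have ratio `(1 - a q^ν) / (1 - b q^ν) · x`.
This ratio tends to `x` as `ν → ∞`, and its inverse tends to `(b / a) / x` as `ν → -∞`;
both limits have modulus `< 1`, so a ratio test on each half of `ℤ` gives absolute
convergence.
-/

/-- The infinite q-shifted factorial `(u)_∞ = ∏_{l=0}^∞ (1 - u q^l)`. -/
noncomputable def qPochC (q u : ℂ) : ℂ := ∏' l : ℕ, (1 - u * q ^ l)

/-- The q-shifted factorial `(u)_ν = (u)_∞ / (u q^ν)_∞` for `ν ∈ ℤ`. -/
noncomputable def qPochIntC (q u : ℂ) (ν : ℤ) : ℂ := qPochC q u / qPochC q (u * q ^ ν)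

open Filter Topology

theorem summable_int_of_norm_ratio_le {E : Type*} [SeminormedAddCommGroup E] [CompleteSpace E]
    {f : ℤ → E} {r s : ℝ} (hr : r < 1) (hs : s < 1)
    (hup : ∀ᶠ ν in atTop, ‖f (ν + 1)‖ ≤ r * ‖f ν‖)
    (hdown : ∀ᶠ ν in atBot, ‖f ν‖ ≤ s * ‖f (ν + 1)‖) :
    Summable f := by
  refine .of_nat_of_neg_add_one (summable_of_ratio_norm_eventually_le hr ?_)
    (summable_of_ratio_norm_eventually_le hs ?_)
  · filter_upwards [tendsto_natCast_atTop_atTop.eventually hup] with n hn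
    simpa using hn
  · have hneg : Tendsto (fun n : ℕ => -((n : ℤ) + 2)) atTop atBot :=
      tendsto_neg_atTop_atBot.comp
        (tendsto_atTop_add_const_right _ 2 tendsto_natCast_atTop_atTop)
    filter_upwards [hneg.eventually hdown] with n hn
    convert hn using 4 <;> push_cast <;> ring

theorem summable_norm_int_of_tendsto_ratio {𝕜 : Type*} [NormedField 𝕜]
    {f ρ σ : ℤ → 𝕜} {l m : 𝕜} (hl : ‖l‖ < 1) (hm : ‖m‖ < 1)
    (hρ : Tendsto ρ atTop (𝓝 l)) (hσ : Tendsto σ atBot (𝓝 m))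
    (hup : ∀ᶠ ν in atTop, f (ν + 1) = f ν * ρ ν)
    (hdown : ∀ᶠ ν in atBot, f ν = f (ν + 1) * σ ν) :
    Summable fun ν => ‖f ν‖ := by
  obtain ⟨r, hlr, hr⟩ := exists_between hl
  obtain ⟨s, hms, hs⟩ := exists_between hm
  refine summable_int_of_norm_ratio_le hr hs ?_ ?_
  · filter_upwards [hup, hρ.norm.eventually (gt_mem_nhds hlr)] with ν hν hρν
    rw [norm_norm, norm_norm, hν, norm_mul, mul_comm r]
    exact mul_le_mul_of_nonneg_left hρν.le (norm_nonneg _)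
  · filter_upwards [hdown, hσ.norm.eventually (gt_mem_nhds hms)] with ν hν hσν
    rw [norm_norm, norm_norm, hν, norm_mul, mul_comm s]
    exact mul_le_mul_of_nonneg_left hσν.le (norm_nonneg _)

section zpow
variable {𝕜 : Type*} [NormedDivisionRing 𝕜] {q : 𝕜}

theorem tendsto_zpow_atTop_nhds_zero_of_norm_lt_one (hq : ‖q‖ < 1) :
    Tendsto (fun ν : ℤ => q ^ ν) atTop (𝓝 0) := by
  rw [← Nat.map_cast_int_atTop, tendsto_map'_iff]
  simpa [Function.comp_def] using tendsto_pow_atTop_nhds_zero_of_norm_lt_one hq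

theorem eventually_cofinite_mul_zpow_ne_one (hq : ‖q‖ ≠ 1) (hq0 : q ≠ 0) (u : 𝕜) :
    ∀ᶠ ν : ℤ in cofinite, u * q ^ ν ≠ 1 := by
  refine Set.Subsingleton.finite fun m hm n hn => ?_
  simp only [Set.mem_compl_iff, Set.mem_ofPred_eq, not_not] at hm hn
  have hu : u ≠ 0 := left_ne_zero_of_mul_eq_one hm
  have hmn : q ^ m = q ^ n := mul_left_cancel₀ hu (hm.trans hn.symm)
  exact zpow_right_injective₀ (norm_pos_iff.2 hq0) hq
    (by simpa only [norm_zpow] using congrArg norm hmn)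

end zpow

section qPochhammer
variable {q : ℂ}

theorem multipliable_one_sub_mul_pow (hq : ‖q‖ < 1) (u : ℂ) :
    Multipliable fun l : ℕ => 1 - u * q ^ l := by
  have hsum : Summable fun l : ℕ => ‖-(u * q ^ l)‖ := by
    simpa using (summable_geometric_of_lt_one (norm_nonneg _) hq).mul_left ‖u‖
  simpa [sub_eq_add_neg] using multipliable_one_add_of_summable hsum

theorem qPochC_eq_one_sub_mul (hq : ‖q‖ < 1) (u : ℂ) :
    qPochC q u = (1 - u) * qPochC q (u * q) := by
  have hshift : (fun l : ℕ => 1 - u * q ^ (l + 1)) = fun l : ℕ => 1 - u * q * q ^ l := by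
    ext l; ring
  rw [qPochC, tprod_eq_zero_mul' (hshift ▸ multipliable_one_sub_mul_pow hq (u * q)), hshift,
    pow_zero, mul_one, qPochC]

theorem qPochC_mul_zpow_eq_one_sub_mul (hq : ‖q‖ < 1) (hq0 : q ≠ 0) (u : ℂ) (ν : ℤ) :
    qPochC q (u * q ^ ν) = (1 - u * q ^ ν) * qPochC q (u * q ^ (ν + 1)) := by
  rw [zpow_add_one₀ hq0, ← mul_assoc]
  exact qPochC_eq_one_sub_mul hq _

theorem qPochIntC_add_one (hq : ‖q‖ < 1) (hq0 : q ≠ 0) {u : ℂ} {ν : ℤ}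
    (h : u * q ^ ν ≠ 1) : qPochIntC q u (ν + 1) = qPochIntC q u ν * (1 - u * q ^ ν) := by
  rw [qPochIntC, qPochIntC, qPochC_mul_zpow_eq_one_sub_mul hq hq0 u ν, mul_comm (1 - u * q ^ ν),
    ← div_div, div_mul_cancel₀ _ (sub_ne_zero.2 h.symm)]

theorem tendsto_one_sub_mul_zpow_div_atTop (hq : ‖q‖ < 1) (a b : ℂ) :
    Tendsto (fun ν : ℤ => (1 - a * q ^ ν) / (1 - b * q ^ ν)) atTop (𝓝 1) := by
  have h := tendsto_zpow_atTop_nhds_zero_of_norm_lt_one hq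
  have hlim := ((tendsto_const_nhds (x := (1 : ℂ))).sub (h.const_mul a)).div
    (tendsto_const_nhds.sub (h.const_mul b)) (by simp : (1 : ℂ) - b * 0 ≠ 0)
  rwa [mul_zero, mul_zero, sub_zero, div_one] at hlim

theorem tendsto_one_sub_mul_zpow_div_atBot (hq : ‖q‖ < 1) (hq0 : q ≠ 0) {a : ℂ}
    (ha : a ≠ 0) (b : ℂ) :
    Tendsto (fun ν : ℤ => (1 - b * q ^ ν) / (1 - a * q ^ ν)) atBot (𝓝 (b / a)) := by
  have h : Tendsto (fun ν : ℤ => q ^ (-ν)) atBot (𝓝 0) :=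
    (tendsto_zpow_atTop_nhds_zero_of_norm_lt_one hq).comp tendsto_neg_atBot_atTop
  have hrw : ∀ ν : ℤ,
      (1 - b * q ^ ν) / (1 - a * q ^ ν) = (q ^ (-ν) - b) / (q ^ (-ν) - a) := by
    intro ν
    rw [← mul_div_mul_left _ _ (zpow_ne_zero (-ν) hq0), mul_sub, mul_sub, mul_one,
      mul_left_comm _ b, mul_left_comm _ a, ← zpow_add₀ hq0, neg_add_cancel, zpow_zero,
      mul_one, mul_one]
  have hlim := (h.sub_const b).div (h.sub_const a) (by simpa using ha)
  rw [zero_sub, zero_sub, neg_div_neg_eq] at hlim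
  exact hlim.congr fun ν => (hrw ν).symm

end qPochhammer

noncomputable def onePsiOneTerm (q a b x : ℂ) (ν : ℤ) : ℂ :=
  qPochIntC q a ν / qPochIntC q b ν * x ^ ν

section onePsiOneTerm
variable {q a b x : ℂ} {ν : ℤ}

theorem onePsiOneTerm_add_one (hq : ‖q‖ < 1) (hq0 : q ≠ 0) (hx : x ≠ 0)
    (ha : a * q ^ ν ≠ 1) (hb : b * q ^ ν ≠ 1) :
    onePsiOneTerm q a b x (ν + 1) =
      onePsiOneTerm q a b x ν * ((1 - a * q ^ ν) / (1 - b * q ^ ν) * x) := by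
  rw [onePsiOneTerm, onePsiOneTerm, qPochIntC_add_one hq hq0 ha, qPochIntC_add_one hq hq0 hb,
    zpow_add_one₀ hx, mul_div_mul_comm]
  ring

theorem onePsiOneTerm_eq_add_one_mul (hq : ‖q‖ < 1) (hq0 : q ≠ 0) (hx : x ≠ 0)
    (ha : a * q ^ ν ≠ 1) (hb : b * q ^ ν ≠ 1) :
    onePsiOneTerm q a b x ν =
      onePsiOneTerm q a b x (ν + 1) * ((1 - b * q ^ ν) / (1 - a * q ^ ν) / x) := by
  have hσ : (1 - b * q ^ ν) / (1 - a * q ^ ν) ≠ 0 :=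
    div_ne_zero (sub_ne_zero.2 hb.symm) (sub_ne_zero.2 ha.symm)
  have hinv :
      (1 - a * q ^ ν) / (1 - b * q ^ ν) * x * ((1 - b * q ^ ν) / (1 - a * q ^ ν) / x) = 1 := by
    rw [← inv_div, div_eq_mul_inv _ x, mul_mul_mul_comm, inv_mul_cancel₀ hσ,
      mul_inv_cancel₀ hx, one_mul]
  rw [onePsiOneTerm_add_one hq hq0 hx ha hb, mul_assoc, hinv, mul_one]

end onePsiOneTerm

theorem one_psi_one_abs_convergence_general (q : ℝ) (hq0 : 0 < q) (hq1 : q < 1)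
    (a b x : ℂ) (ha : a ≠ 0)
    (hx1 : ‖b / a‖ < ‖x‖) (hx2 : ‖x‖ < 1) :
    Summable (fun ν : ℤ =>
      ‖qPochIntC (q : ℂ) a ν / qPochIntC (q : ℂ) b ν‖ * ‖x‖ ^ ν) := by
  have hq : ‖(q : ℂ)‖ < 1 := by rwa [Complex.norm_real, Real.norm_of_nonneg hq0.le]
  have hqne : (q : ℂ) ≠ 0 := Complex.ofReal_ne_zero.2 hq0.ne'
  have hx : x ≠ 0 := norm_pos_iff.1 ((norm_nonneg _).trans_lt hx1)
  have hgeneric :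
      ∀ᶠ ν : ℤ in cofinite, a * (q : ℂ) ^ ν ≠ 1 ∧ b * (q : ℂ) ^ ν ≠ 1 :=
    (eventually_cofinite_mul_zpow_ne_one hq.ne hqne a).and
      (eventually_cofinite_mul_zpow_ne_one hq.ne hqne b)
  have hsum := summable_norm_int_of_tendsto_ratio (f := onePsiOneTerm q a b x)
    (by rwa [one_mul]) (by rwa [norm_div, div_lt_one (norm_pos_iff.2 hx)])
    ((tendsto_one_sub_mul_zpow_div_atTop hq a b).mul_const x)
    ((tendsto_one_sub_mul_zpow_div_atBot hq hqne ha b).div_const x)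
    ((hgeneric.filter_mono atTop_le_cofinite).mono fun ν h =>
      onePsiOneTerm_add_one hq hqne hx h.1 h.2)
    ((hgeneric.filter_mono atBot_le_cofinite).mono fun ν h =>
      onePsiOneTerm_eq_add_one_mul hq hqne hx h.1 h.2)
  simpa only [onePsiOneTerm, norm_mul, norm_zpow] using hsum

/-- Absolute convergence of the bilateral `₁ψ₁` series. -/
theorem one_psi_one_abs_convergence (q : ℝ) (hq0 : 0 < q) (hq1 : q < 1)
    (a b x : ℂ) (ha : a ≠ 0) (hx : x ≠ 0)
    (hb : ∀ m : ℤ, 1 ≤ m → b ≠ (q : ℂ) ^ m)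
    (hx1 : ‖b / a‖ < ‖x‖) (hx2 : ‖x‖ < 1) :
    Summable (fun ν : ℤ =>
      ‖qPochIntC (q : ℂ) a ν / qPochIntC (q : ℂ) b ν‖ * ‖x‖ ^ ν) :=
  one_psi_one_abs_convergence_general q hq0 hq1 a b x ha hx1 hx2
end

section
/- The q-difference equation in α for the ₁ψ₁ Jackson integral: let 0<q<1, let α, β be real numbers with 0 < α and (α+1) + β < 1, and let ξ > 0 satisfy log_q ξ + β ∉ ℤ. Define I(α;ξ) := (1-q) ∑_{ν∈ℤ} (ξ q^ν)^α (q·ξq^ν)_∞ / (q^β·ξq^ν)_∞. Then I(α;ξ) = ((1 - q^{α+β})/(1 - q^{α})) · I(α+1;ξ). -/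
/-- The infinite q-shifted factorial `(u)_∞ = ∏_{l=0}^∞ (1 - u q^l)`. -/
noncomputable def qPoch (q u : ℝ) : ℝ := ∏' l : ℕ, (1 - u * q ^ l)

/-- The bilateral Jackson integral `I(α;ξ) = ∫_0^{ξ∞} z^α (qz)_∞/(q^β z)_∞ d_q z / z`. -/
noncomputable def ramanujanI (q β α ξ : ℝ) : ℝ :=
  (1 - q) * ∑' ν : ℤ, (ξ * q ^ ν) ^ α * qPoch q (q * (ξ * q ^ ν)) / qPoch q (q ^ β * (ξ * q ^ ν))

/-! Write `T_a(z) = z^a (qz)_∞ / (q^β z)_∞`. The recursion `(u)_∞ = (1 - u) (qu)_∞` gives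
`(1 - qz) T_a(qz) = q^a (1 - q^β z) T_a(z)`, and `z T_a(z) = T_{a+1}(z)`. Hence the bilateral sum of
`(1 - z) T_a(z)` over `z = ξ q^ν`, which is invariant under `ν ↦ ν + 1`, equals both
`∑ T_a - ∑ T_{a+1}` and `q^a ∑ T_a - q^{a+β} ∑ T_{a+1}`. The same step relation gives convergence
by the ratio test: consecutive terms have ratio tending to `q^a` as `ν → ∞` and to `q^{1-a-β}`
as `ν → -∞`, and the genericity condition keeps the denominators `1 - q^β z` nonzero. -/

open Filter Topology

theorem summable_of_eventually_eq_mul_of_tendsto {𝕜 : Type*} [NormedField 𝕜] [CompleteSpace 𝕜]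
    {f c : ℕ → 𝕜} {l : 𝕜} (hl : ‖l‖ < 1) (hc : Tendsto c atTop (𝓝 l))
    (hf : ∀ᶠ n in atTop, f (n + 1) = c n * f n) : Summable f := by
  obtain ⟨r, hlr, hr1⟩ := exists_between hl
  refine summable_of_ratio_norm_eventually_le hr1 ?_
  filter_upwards [hf, hc.norm.eventually_lt_const hlr] with n hfn hcn
  rw [hfn, norm_mul]
  exact mul_le_mul_of_nonneg_right hcn.le (norm_nonneg _)

theorem multipliable_qPoch {q : ℝ} (hq : |q| < 1) (u : ℝ) :
    Multipliable fun l : ℕ => 1 - u * q ^ l := by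
  simpa [sub_eq_add_neg] using
    Real.multipliable_one_add_of_summable ((summable_geometric_of_abs_lt_one hq).mul_left (-u))

theorem qPoch_eq_one_sub_mul {q : ℝ} (hq : |q| < 1) (u : ℝ) :
    qPoch q u = (1 - u) * qPoch q (q * u) := by
  have hshift : Multipliable fun l : ℕ => 1 - u * q ^ (l + 1) :=
    (multipliable_qPoch hq (q * u)).congr fun l => by ring
  unfold qPoch
  rw [tprod_eq_zero_mul' (f := fun l : ℕ => 1 - u * q ^ l) hshift, pow_zero, mul_one]
  congr 1
  exact tprod_congr fun l => by ring

theorem rpow_mul_mul_zpow_ne_one {q β ξ : ℝ} (hq0 : 0 < q) (hq1 : q ≠ 1) (hξ : 0 < ξ)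
    (hgen : ∀ m : ℤ, Real.logb q ξ + β ≠ m) (ν : ℤ) : q ^ β * (ξ * q ^ ν) ≠ 1 := by
  intro h
  apply hgen (-ν)
  have hlog := congrArg (Real.logb q) h
  rw [Real.logb_mul (by positivity) (by positivity), Real.logb_mul hξ.ne' (by positivity),
    Real.logb_rpow hq0 hq1, ← Real.rpow_intCast, Real.logb_rpow hq0 hq1, Real.logb_one] at hlog
  push_cast
  linarith

noncomputable def jacksonTerm (q β a z : ℝ) : ℝ :=
  z ^ a * qPoch q (q * z) / qPoch q (q ^ β * z)

section jacksonTerm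

variable {q β a z ξ : ℝ}

theorem mul_jacksonTerm (hz : z ≠ 0) : z * jacksonTerm q β a z = jacksonTerm q β (a + 1) z := by
  rw [jacksonTerm, jacksonTerm, Real.rpow_add_one hz]
  ring

theorem jacksonTerm_mul_left (hq0 : 0 ≤ q) (hq1 : q < 1) (hz : 0 ≤ z) (hβz : q ^ β * z ≠ 1) :
    (1 - q * z) * jacksonTerm q β a (q * z) = q ^ a * (1 - q ^ β * z) * jacksonTerm q β a z := by
  have hq : |q| < 1 := abs_lt.mpr ⟨by linarith, hq1⟩
  have hβz' : 1 - q ^ β * z ≠ 0 := sub_ne_zero.mpr (Ne.symm hβz)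
  rw [jacksonTerm, jacksonTerm, Real.mul_rpow hq0 hz, qPoch_eq_one_sub_mul hq (q * z),
    qPoch_eq_one_sub_mul hq (q ^ β * z), mul_left_comm q (q ^ β) z]
  generalize qPoch q (q ^ β * (q * z)) = Q
  rcases eq_or_ne Q 0 with rfl | hQ
  · simp
  · generalize 1 - q ^ β * z = w at hβz' ⊢
    field_simp

theorem jacksonTerm_mul_left_eq_mul (hq0 : 0 ≤ q) (hq1 : q < 1) (hz : 0 ≤ z) (hβz : q ^ β * z ≠ 1)
    (hqz : q * z ≠ 1) :
    jacksonTerm q β a (q * z) = q ^ a * (1 - q ^ β * z) / (1 - q * z) * jacksonTerm q β a z := by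
  rw [div_mul_eq_mul_div, eq_div_iff (sub_ne_zero.mpr (Ne.symm hqz)), mul_comm,
    jacksonTerm_mul_left hq0 hq1 hz hβz]

theorem jacksonTerm_eq_mul_mul_left (hq0 : 0 < q) (hq1 : q < 1) (hz : 0 < z) (hβz : q ^ β * z ≠ 1) :
    jacksonTerm q β a z = (z⁻¹ - q) / (q ^ a * (z⁻¹ - q ^ β)) * jacksonTerm q β a (q * z) := by
  have hβz' : z⁻¹ - q ^ β ≠ 0 := by
    rw [sub_ne_zero]
    intro h
    exact hβz (by rw [← h, inv_mul_cancel₀ hz.ne'])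
  have hqa : q ^ a ≠ 0 := (Real.rpow_pos_of_pos hq0 a).ne'
  rw [div_mul_eq_mul_div, eq_div_iff (mul_ne_zero hqa hβz'),
    show z⁻¹ - q = z⁻¹ * (1 - q * z) by field_simp,
    show z⁻¹ - q ^ β = z⁻¹ * (1 - q ^ β * z) by field_simp, mul_assoc,
    jacksonTerm_mul_left hq0.le hq1 hz.le hβz]
  ring

theorem summable_jacksonTerm_natCast (hq0 : 0 < q) (hq1 : q < 1) (hξ : 0 < ξ)
    (hβξ : ∀ ν : ℤ, q ^ β * (ξ * q ^ ν) ≠ 1) (ha : 0 < a) :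
    Summable fun n : ℕ => jacksonTerm q β a (ξ * q ^ (n : ℤ)) := by
  have hz : Tendsto (fun n : ℕ => ξ * q ^ n) atTop (𝓝 0) := by
    simpa using (tendsto_pow_atTop_nhds_zero_of_lt_one hq0.le hq1).const_mul ξ
  have hlim : ‖q ^ a‖ < 1 := by
    rw [Real.norm_of_nonneg (Real.rpow_nonneg hq0.le a)]
    exact Real.rpow_lt_one hq0.le hq1 ha
  refine summable_of_eventually_eq_mul_of_tendsto hlim
    (c := fun n : ℕ => q ^ a * (1 - q ^ β * (ξ * q ^ n)) / (1 - q * (ξ * q ^ n))) ?_ ?_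
  · have h := (((hz.const_mul (q ^ β)).const_sub 1).const_mul (q ^ a)).div
      ((hz.const_mul q).const_sub 1) (by simp)
    simp only [mul_zero, sub_zero, mul_one, div_one] at h
    exact h
  · filter_upwards [(hz.const_mul q).eventually_ne (by simp : (q * 0 : ℝ) ≠ 1)] with n hn
    simpa [zpow_add_one₀ hq0.ne', mul_assoc, mul_comm q] using
      jacksonTerm_mul_left_eq_mul (a := a) hq0.le hq1 (by positivity) (by simpa using hβξ n) hn

theorem summable_jacksonTerm_neg_natCast (hq0 : 0 < q) (hq1 : q < 1) (hξ : 0 < ξ)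
    (hβξ : ∀ ν : ℤ, q ^ β * (ξ * q ^ ν) ≠ 1) (haβ : a + β < 1) :
    Summable fun n : ℕ => jacksonTerm q β a (ξ * q ^ (-(n : ℤ))) := by
  have ht : Tendsto (fun n : ℕ => ξ⁻¹ * q ^ (n + 1)) atTop (𝓝 0) := by
    simpa using ((tendsto_pow_atTop_nhds_zero_of_lt_one hq0.le hq1).comp
      (tendsto_add_atTop_nat 1)).const_mul ξ⁻¹
  have hlim : ‖q / (q ^ a * q ^ β)‖ < 1 := by
    rw [← Real.rpow_add hq0, Real.norm_of_nonneg (by positivity), div_lt_one (by positivity)]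
    simpa using Real.rpow_lt_rpow_of_exponent_gt hq0 hq1 haβ
  refine summable_of_eventually_eq_mul_of_tendsto hlim
    (c := fun n : ℕ => (ξ⁻¹ * q ^ (n + 1) - q) / (q ^ a * (ξ⁻¹ * q ^ (n + 1) - q ^ β))) ?_ ?_
  · have h := (ht.sub_const q).div ((ht.sub_const (q ^ β)).const_mul (q ^ a))
      (mul_ne_zero (Real.rpow_pos_of_pos hq0 a).ne' (by simp [(Real.rpow_pos_of_pos hq0 β).ne']))
    simp only [zero_sub, mul_neg, neg_div_neg_eq] at h
    exact h
  · refine .of_forall fun n => ?_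
    have hinv : (ξ * q ^ (-((n + 1 : ℕ) : ℤ)))⁻¹ = ξ⁻¹ * q ^ (n + 1) := by
      rw [mul_inv, zpow_neg, inv_inv, zpow_natCast]
    have hshift : q * (ξ * q ^ (-((n + 1 : ℕ) : ℤ))) = ξ * q ^ (-(n : ℤ)) := by
      rw [mul_left_comm, ← zpow_one_add₀ hq0.ne']
      push_cast
      ring_nf
    have h := jacksonTerm_eq_mul_mul_left (a := a) hq0 hq1 (by positivity)
      (hβξ (-((n + 1 : ℕ) : ℤ)))
    rwa [hinv, hshift] at h

theorem summable_jacksonTerm (hq0 : 0 < q) (hq1 : q < 1) (hξ : 0 < ξ)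
    (hβξ : ∀ ν : ℤ, q ^ β * (ξ * q ^ ν) ≠ 1) (ha : 0 < a) (haβ : a + β < 1) :
    Summable fun ν : ℤ => jacksonTerm q β a (ξ * q ^ ν) :=
  .of_nat_of_neg (summable_jacksonTerm_natCast hq0 hq1 hξ hβξ ha)
    (summable_jacksonTerm_neg_natCast hq0 hq1 hξ hβξ haβ)

theorem one_sub_rpow_mul_tsum_jacksonTerm (hq0 : 0 < q) (hq1 : q < 1) (hξ : 0 < ξ)
    (hβξ : ∀ ν : ℤ, q ^ β * (ξ * q ^ ν) ≠ 1) (ha : 0 < a) (haβ : a + 1 + β < 1) :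
    (1 - q ^ a) * ∑' ν : ℤ, jacksonTerm q β a (ξ * q ^ ν) =
      (1 - q ^ (a + β)) * ∑' ν : ℤ, jacksonTerm q β (a + 1) (ξ * q ^ ν) := by
  have hz (ν : ℤ) : 0 < ξ * q ^ ν := by positivity
  have hA := summable_jacksonTerm hq0 hq1 hξ hβξ ha (by linarith)
  have hB := summable_jacksonTerm hq0 hq1 hξ hβξ (by linarith : 0 < a + 1) haβ
  have hshift := (Equiv.addRight (1 : ℤ)).tsum_eq
    fun ν => (1 - ξ * q ^ ν) * jacksonTerm q β a (ξ * q ^ ν)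
  have hstep (ν : ℤ) : (1 - ξ * q ^ (ν + 1)) * jacksonTerm q β a (ξ * q ^ (ν + 1)) =
      q ^ a * jacksonTerm q β a (ξ * q ^ ν) -
        q ^ (a + β) * jacksonTerm q β (a + 1) (ξ * q ^ ν) := by
    have hzq : ξ * q ^ (ν + 1) = q * (ξ * q ^ ν) := by rw [zpow_add_one₀ hq0.ne']; ring
    rw [hzq, jacksonTerm_mul_left hq0.le hq1 (hz ν).le (hβξ ν), ← mul_jacksonTerm (hz ν).ne',
      Real.rpow_add hq0]
    ring
  have hdiff (ν : ℤ) : (1 - ξ * q ^ ν) * jacksonTerm q β a (ξ * q ^ ν) =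
      jacksonTerm q β a (ξ * q ^ ν) - jacksonTerm q β (a + 1) (ξ * q ^ ν) := by
    rw [← mul_jacksonTerm (hz ν).ne']
    ring
  simp only [Equiv.coe_addRight, hstep, hdiff] at hshift
  rw [(hA.mul_left _).tsum_sub (hB.mul_left _), hA.tsum_sub hB, tsum_mul_left, tsum_mul_left]
    at hshift
  linear_combination -hshift

end jacksonTerm

/-- The q-difference equation in `α` for the `₁ψ₁` Jackson integral. -/
theorem one_psi_one_q_difference_equation (q α β ξ : ℝ) (hq0 : 0 < q) (hq1 : q < 1)
    (hα : 0 < α) (hαβ : (α + 1) + β < 1) (hξ : 0 < ξ)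
    (hgen : ∀ m : ℤ, Real.logb q ξ + β ≠ m) :
    ramanujanI q β α ξ = ((1 - q ^ (α + β)) / (1 - q ^ α)) * ramanujanI q β (α + 1) ξ := by
  have hqα : 1 - q ^ α ≠ 0 := (sub_pos.mpr (Real.rpow_lt_one hq0.le hq1 hα)).ne'
  have key := one_sub_rpow_mul_tsum_jacksonTerm hq0 hq1 hξ
    (rpow_mul_mul_zpow_ne_one hq0 hq1.ne hξ hgen) hα hαβ
  change (1 - q) * ∑' ν : ℤ, jacksonTerm q β α (ξ * q ^ ν) =
    _ * ((1 - q) * ∑' ν : ℤ, jacksonTerm q β (α + 1) (ξ * q ^ ν))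
  rw [div_mul_eq_mul_div, eq_div_iff hqα]
  linear_combination (1 - q) * key
end

section
/- Jackson-integral representation of the very-well-poised ₆ψ₆ series: let 0<q<1, let α₁,α₂,α₃,α₄ be real numbers with α₁+α₂+α₃+α₄ > 1, set a_i = q^{α_i}, and let ξ > 0 with ξ ≠ 1 and log_q ξ + α_m ∉ ℤ for m = 1,…,4 and 2 log_q ξ ∉ ℤ. Define Φ(z) := ∏_{i=1}^4 z^{1/2-α_i} (q z/a_i)_∞ / (z a_i)_∞, Δ(z) := z^{-1} - z, and J(ξ) := (1-q) ∑_{ν∈ℤ} Φ(ξ q^ν) Δ(ξ q^ν). Then the very-well-poised ₆ψ₆ series ∑_{ν∈ℤ} ((1 - ξ² q^{2ν})/(1-ξ²)) · ∏_{i=1}^4 ( (a_i ξ)_ν / (q ξ / a_i)_ν ) · (q^{1-α₁-α₂-α₃-α₄})^ν equals ( ξ^{α₁+α₂+α₃+α₄-1} / ((1-q)(1-ξ²)) ) · ∏_{i=1}^4 ( (a_i ξ)_∞ / (q ξ / a_i)_∞ ) · J(ξ). -/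
open Finset

/-- The q-shifted factorial `(u)_ν = (u)_∞ / (u q^ν)_∞` for `ν ∈ ℤ`. -/
noncomputable def qPochInt (q u : ℝ) (ν : ℤ) : ℝ := qPoch q u / qPoch q (u * q ^ ν)

/-- `Φ(z) = ∏_{i=1}^4 z^{1/2-α_i} (qz/a_i)_∞ / (z a_i)_∞` with `a_i = q^{α_i}`. -/
noncomputable def PhiBC (q : ℝ) (α : Fin 4 → ℝ) (z : ℝ) : ℝ :=
  ∏ i : Fin 4, z ^ ((1 : ℝ) / 2 - α i) * qPoch q (q * z / q ^ α i) / qPoch q (z * q ^ α i)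

/-- `Δ(z) = z⁻¹ - z`. -/
noncomputable def DeltaBC (z : ℝ) : ℝ := z⁻¹ - z

/-- The bilateral Jackson integral `J(ξ) = ∫_0^{ξ∞} Φ(z) Δ(z) d_q z / z`. -/
noncomputable def JBC (q : ℝ) (α : Fin 4 → ℝ) (ξ : ℝ) : ℝ :=
  (1 - q) * ∑' ν : ℤ, PhiBC q α (ξ * q ^ ν) * DeltaBC (ξ * q ^ ν)

/-!
The identity holds term by term. At the node `z = ξ q^ν` of the Jackson integral,
`(u)_ν = (u)_∞ / (u q^ν)_∞` splits each ratio of `(·)_ν` into the constant ratio of `(·)_∞` at `ξ`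
times the `(·)_∞` factors of `Φ(z)`, while the powers `ξ^(Σα - 1) z^(2 - Σα) Δ(z)` collapse to
`(1 - ξ² q^(2ν)) (q^(1 - Σα))^ν`. Since `tsum` commutes with constant factors unconditionally, no
convergence is needed.
-/

theorem qPochInt_div_qPochInt (q a b : ℝ) (ν : ℤ) :
    qPochInt q a ν / qPochInt q b ν =
      qPoch q a / qPoch q b * (qPoch q (b * q ^ ν) / qPoch q (a * q ^ ν)) := by
  rw [qPochInt, qPochInt, div_div_div_comm, div_div_eq_mul_div, mul_div_assoc]

theorem PhiBC_eq_rpow_mul_prod (q : ℝ) (α : Fin 4 → ℝ) {z : ℝ} (hz : 0 < z) :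
    PhiBC q α z = z ^ (2 - (α 0 + α 1 + α 2 + α 3)) *
      ∏ i : Fin 4, qPoch q (q * z / q ^ α i) / qPoch q (z * q ^ α i) := by
  simp only [PhiBC, mul_div_assoc, prod_mul_distrib, Fin.prod_univ_four,
    ← Real.rpow_add hz]
  ring_nf

theorem rpow_mul_DeltaBC {z : ℝ} (hz : 0 < z) (t : ℝ) :
    z ^ t * DeltaBC z = z ^ (t - 1) * (1 - z ^ 2) := by
  rw [DeltaBC, Real.rpow_sub_one hz.ne']
  field_simp

theorem rpow_neg_mul_rpow_mul_zpow {x q : ℝ} (hx : 0 < x) (hq : 0 < q) (ν : ℤ) (t : ℝ) :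
    x ^ (-t) * (x * q ^ ν) ^ t = (q ^ t) ^ ν := by
  rw [Real.mul_rpow hx.le (zpow_pos hq ν).le, ← mul_assoc, ← Real.rpow_add hx, neg_add_cancel,
    Real.rpow_zero, one_mul, ← Real.rpow_intCast, ← Real.rpow_intCast, ← Real.rpow_mul hq.le,
    ← Real.rpow_mul hq.le, mul_comm]

theorem rpow_mul_rpow_mul_DeltaBC {ξ q : ℝ} (hξ : 0 < ξ) (hq : 0 < q) (ν : ℤ) (s : ℝ) :
    ξ ^ (s - 1) * ((ξ * q ^ ν) ^ (2 - s) * DeltaBC (ξ * q ^ ν)) =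
      (1 - ξ ^ 2 * q ^ (2 * ν)) * (q ^ (1 - s)) ^ ν := by
  have hsq : (q ^ ν) ^ 2 = q ^ (2 * ν) := by
    rw [← zpow_natCast, ← zpow_mul, mul_comm]; rfl
  rw [rpow_mul_DeltaBC (mul_pos hξ (zpow_pos hq ν)), ← neg_sub, ← mul_assoc,
    show 2 - s - 1 = 1 - s by ring, rpow_neg_mul_rpow_mul_zpow hξ hq, mul_pow, hsq]
  ring

theorem six_psi_six_jackson_integral_representation_general (q : ℝ) (hq0 : 0 < q) (hq1 : q < 1)
    (α : Fin 4 → ℝ)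
    (ξ : ℝ) (hξ : 0 < ξ) :
    ∑' ν : ℤ,
        ((1 - ξ ^ 2 * q ^ (2 * ν)) / (1 - ξ ^ 2)) *
          (∏ i : Fin 4, qPochInt q (q ^ α i * ξ) ν / qPochInt q (q * ξ / q ^ α i) ν) *
          (q ^ (1 - (α 0 + α 1 + α 2 + α 3))) ^ ν =
      (ξ ^ (α 0 + α 1 + α 2 + α 3 - 1) / ((1 - q) * (1 - ξ ^ 2))) *
        (∏ i : Fin 4, qPoch q (q ^ α i * ξ) / qPoch q (q * ξ / q ^ α i)) * JBC q α ξ := by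
  have hq : 1 - q ≠ 0 := (sub_pos.2 hq1).ne'
  rw [JBC, ← tsum_mul_left, ← tsum_mul_left]
  refine tsum_congr fun ν => ?_
  have hratio (i : Fin 4) : qPochInt q (q ^ α i * ξ) ν / qPochInt q (q * ξ / q ^ α i) ν =
      qPoch q (q ^ α i * ξ) / qPoch q (q * ξ / q ^ α i) *
        (qPoch q (q * (ξ * q ^ ν) / q ^ α i) / qPoch q (ξ * q ^ ν * q ^ α i)) := by
    rw [qPochInt_div_qPochInt]; ring_nf
  have hscalar := eq_div_of_mul_eq (zpow_pos (Real.rpow_pos_of_pos hq0 _) ν).ne'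
    (rpow_mul_rpow_mul_DeltaBC hξ hq0 ν (α 0 + α 1 + α 2 + α 3)).symm
  simp only [hratio, prod_mul_distrib, PhiBC_eq_rpow_mul_prod q α (mul_pos hξ (zpow_pos hq0 ν)),
    hscalar]
  field_simp

/-- Jackson-integral representation of the very-well-poised `₆ψ₆` series. -/
theorem six_psi_six_jackson_integral_representation (q : ℝ) (hq0 : 0 < q) (hq1 : q < 1)
    (α : Fin 4 → ℝ) (hα : 1 < α 0 + α 1 + α 2 + α 3)
    (ξ : ℝ) (hξ : 0 < ξ) (hξ1 : ξ ≠ 1)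
    (hgen : ∀ m : Fin 4, ∀ k : ℤ, Real.logb q ξ + α m ≠ k)
    (hgen2 : ∀ k : ℤ, 2 * Real.logb q ξ ≠ k) :
    ∑' ν : ℤ,
        ((1 - ξ ^ 2 * q ^ (2 * ν)) / (1 - ξ ^ 2)) *
          (∏ i : Fin 4, qPochInt q (q ^ α i * ξ) ν / qPochInt q (q * ξ / q ^ α i) ν) *
          (q ^ (1 - (α 0 + α 1 + α 2 + α 3))) ^ ν =
      (ξ ^ (α 0 + α 1 + α 2 + α 3 - 1) / ((1 - q) * (1 - ξ ^ 2))) *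
        (∏ i : Fin 4, qPoch q (q ^ α i * ξ) / qPoch q (q * ξ / q ^ α i)) * JBC q α ξ :=
  six_psi_six_jackson_integral_representation_general q hq0 hq1 α ξ hξ
end
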